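/- arXiv:1909.05787 — 3 statements merged into one kernel-verified Lean document; each statement's English description precedes it below -/
import Mathlib

section
/- (Lemma 1) Let F be a positive integer, Φ an F×F real matrix, σ_1, …, σ_F > 0, and δ_1, …, δ_F > 0. For integer T ≥ 1 define ρ_j(T) = sqrt( σ_j² + Σ_{p=1}^{T−1} Σ_{m=1}^{F} ((Φ^p)_{j,m})² σ_m² ) and the prediction error probability ε^p(T) = 1 − Π_{j=1}^{F} [ 1 − ψ(−δ_j / ρ_j(T)) ], where ψ is the cumulative distribution function of the standard Gaussian. If for every T ≥ 1 the matrix power Φ^T is nonzero, then ε^p is strictly increasing in the prediction horizon T, i.e., ε^p(T) < ε^p(T+1) for all T ≥ 1. -/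
open Finset Matrix MeasureTheory ProbabilityTheory

/-- The cumulative distribution function of the standard Gaussian distribution. -/
noncomputable def stdGaussianCDF (x : ℝ) : ℝ :=
  ((gaussianReal 0 1) (Set.Iic x)).toReal

lemma gaussianReal_pos_of_volume_pos {s : Set ℝ} (h : volume s ≠ 0) :
    0 < gaussianReal 0 1 s := by
  have habs := gaussianReal_absolutelyContinuous' 0 (v := 1) one_ne_zero
  by_contra hc
  push_neg at hc
  exact h (habs (le_antisymm hc bot_le))

lemma stdGaussianCDF_strictMono : StrictMono stdGaussianCDF := by
  intro x y hxy
  have hmeas : gaussianReal 0 1 (Set.Iic y)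
      = gaussianReal 0 1 (Set.Iic x) + gaussianReal 0 1 (Set.Ioc x y) := by
    rw [← measure_union _ measurableSet_Ioc, Set.Iic_union_Ioc_eq_Iic hxy.le]
    exact Set.Iic_disjoint_Ioc le_rfl
  have hpos : 0 < gaussianReal 0 1 (Set.Ioc x y) := by
    apply gaussianReal_pos_of_volume_pos
    simp [Real.volume_Ioc, hxy]
  have hfin : ∀ s : Set ℝ, gaussianReal 0 1 s ≠ ⊤ :=
    fun s => measure_ne_top _ s
  unfold stdGaussianCDF
  rw [hmeas, ENNReal.toReal_add (hfin _) (hfin _)]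
  have : 0 < (gaussianReal 0 1 (Set.Ioc x y)).toReal :=
    ENNReal.toReal_pos hpos.ne' (hfin _)
  linarith

lemma stdGaussianCDF_lt_one (x : ℝ) : stdGaussianCDF x < 1 := by
  have hu : gaussianReal 0 1 (Set.univ : Set ℝ) = 1 := measure_univ
  have hmeas : gaussianReal 0 1 (Set.univ : Set ℝ)
      = gaussianReal 0 1 (Set.Iic x) + gaussianReal 0 1 (Set.Ioi x) := by
    rw [← measure_union _ measurableSet_Ioi, Set.Iic_union_Ioi]
    exact Set.Iic_disjoint_Ioi le_rfl
  have hpos : 0 < gaussianReal 0 1 (Set.Ioi x) := by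
    apply gaussianReal_pos_of_volume_pos
    simp [Real.volume_Ioi]
  have hfin : ∀ s : Set ℝ, gaussianReal 0 1 s ≠ ⊤ :=
    fun s => measure_ne_top _ s
  unfold stdGaussianCDF
  have h1 : (gaussianReal 0 1 (Set.Iic x)).toReal
      + (gaussianReal 0 1 (Set.Ioi x)).toReal = 1 := by
    rw [← ENNReal.toReal_add (hfin _) (hfin _), ← hmeas, hu, ENNReal.toReal_one]
  have : 0 < (gaussianReal 0 1 (Set.Ioi x)).toReal :=
    ENNReal.toReal_pos hpos.ne' (hfin _)
  linarith

/-- Lemma 1: With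
`ρ_j(T) = sqrt(σ_j² + Σ_{p=1}^{T−1} Σ_{m=1}^{F} ((Φ^p)_{j,m})² σ_m²)` and the
prediction error probability `ε^p(T) = 1 − Π_j [1 − ψ(−δ_j/ρ_j(T))]`, if `Φ^T ≠ 0`
for every `T ≥ 1`, then `ε^p` strictly increases with the prediction horizon `T`. -/
theorem prediction_error_probability_strictMono
    (F : ℕ) (hF : 0 < F) (Φ : Matrix (Fin F) (Fin F) ℝ)
    (σ δ : Fin F → ℝ) (hσ : ∀ m, 0 < σ m) (hδ : ∀ j, 0 < δ j)
    (ρ : Fin F → ℕ → ℝ)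
    (hρ : ∀ j, ∀ T : ℕ, 1 ≤ T →
      ρ j T = Real.sqrt (σ j ^ 2 +
        ∑ p ∈ Finset.Icc 1 (T - 1), ∑ m, ((Φ ^ p) j m) ^ 2 * σ m ^ 2))
    (εp : ℕ → ℝ)
    (hεp : ∀ T : ℕ, 1 ≤ T →
      εp T = 1 - ∏ j, (1 - stdGaussianCDF (-δ j / ρ j T)))
    (hΦ : ∀ T : ℕ, 1 ≤ T → Φ ^ T ≠ 0) :
    ∀ T : ℕ, 1 ≤ T → εp T < εp (T + 1) := by
  intro T hT
  -- abbreviations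
  set S : ℕ → Fin F → ℝ := fun t j => σ j ^ 2 +
      ∑ p ∈ Finset.Icc 1 (t - 1), ∑ m, ((Φ ^ p) j m) ^ 2 * σ m ^ 2 with hS
  have hsum_nonneg : ∀ t j, (0:ℝ) ≤
      ∑ p ∈ Finset.Icc 1 (t - 1), ∑ m, ((Φ ^ p) j m) ^ 2 * σ m ^ 2 := by
    intro t j
    apply Finset.sum_nonneg
    intro p _
    apply Finset.sum_nonneg
    intro m _
    positivity
  have hSpos : ∀ t j, 0 < S t j := by
    intro t j
    have := hsum_nonneg t j
    have := hσ j
    simp only [hS]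
    nlinarith
  have hρpos : ∀ j, ∀ t, 1 ≤ t → 0 < ρ j t := by
    intro j t ht
    rw [hρ j t ht]
    exact Real.sqrt_pos.2 (hSpos t j)
  -- sum split: Icc 1 T = Icc 1 (T-1) ∪ {T}
  have hsplit : ∀ j, S (T + 1) j = S T j + ∑ m, ((Φ ^ T) j m) ^ 2 * σ m ^ 2 := by
    intro j
    simp only [hS, Nat.add_sub_cancel]
    have hT' : T = (T - 1) + 1 := (Nat.succ_pred_eq_of_pos hT).symm
    rw [hT', Finset.sum_Icc_succ_top (by omega), ← hT']
    ring
  -- extra term is nonneg, and positive for some j0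
  have hextra_nonneg : ∀ j, (0:ℝ) ≤ ∑ m, ((Φ ^ T) j m) ^ 2 * σ m ^ 2 := by
    intro j; apply Finset.sum_nonneg; intro m _; positivity
  obtain ⟨j0, m0, hjm⟩ : ∃ j m, (Φ ^ T) j m ≠ 0 := by
    by_contra h
    push_neg at h
    exact hΦ T hT (Matrix.ext h)
  have hextra_pos : 0 < ∑ m, ((Φ ^ T) j0 m) ^ 2 * σ m ^ 2 := by
    apply Finset.sum_pos'
    · intro m _; positivity
    · refine ⟨m0, Finset.mem_univ _, ?_⟩
      have h2 : 0 < ((Φ ^ T) j0 m0) ^ 2 :=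
        lt_of_le_of_ne (sq_nonneg _) (Ne.symm (pow_ne_zero 2 hjm))
      exact mul_pos h2 (pow_pos (hσ m0) 2)
  -- ρ monotone
  have hρle : ∀ j, ρ j T ≤ ρ j (T + 1) := by
    intro j
    rw [hρ j T hT, hρ j (T + 1) (by omega)]
    apply Real.sqrt_le_sqrt
    have := hextra_nonneg j
    have := hsplit j
    simp only [hS] at *
    linarith
  have hρlt : ρ j0 T < ρ j0 (T + 1) := by
    rw [hρ j0 T hT, hρ j0 (T + 1) (by omega)]
    apply Real.sqrt_lt_sqrt (le_of_lt (hSpos T j0))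
    have := hsplit j0
    simp only [hS] at *
    linarith
  -- arguments of ψ
  have harg_le : ∀ j, -δ j / ρ j T ≤ -δ j / ρ j (T + 1) := by
    intro j
    rw [neg_div, neg_div, neg_le_neg_iff]
    exact div_le_div_of_nonneg_left (hδ j).le (hρpos j T hT) (hρle j)
  have harg_lt : -δ j0 / ρ j0 T < -δ j0 / ρ j0 (T + 1) := by
    rw [neg_div, neg_div, neg_lt_neg_iff]
    exact div_lt_div_of_pos_left (hδ j0) (hρpos j0 T hT) hρlt
  -- finish
  rw [hεp T hT, hεp (T + 1) (by omega)]
  have hprod : ∏ j, (1 - stdGaussianCDF (-δ j / ρ j (T + 1)))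
      < ∏ j, (1 - stdGaussianCDF (-δ j / ρ j T)) := by
    apply Finset.prod_lt_prod
    · intro j _
      have := stdGaussianCDF_lt_one (-δ j / ρ j (T + 1))
      linarith
    · intro j _
      have := stdGaussianCDF_strictMono.monotone (harg_le j)
      linarith
    · refine ⟨j0, Finset.mem_univ _, ?_⟩
      have := stdGaussianCDF_strictMono harg_lt
      linarith
  linarith
end

section
/- Let ε ∈ (0,1), λ > 0, D > 0, E > 0, and set L = ln(1/ε). Suppose the effective bandwidth relation E = L / ( D · ln( L/(λD) + 1 ) ) holds. Then −(λ/E) · exp(−λ/E) = ( (L + λD)/(−D·E) ) · exp( (L + λD)/(−D·E) ); that is, the quantity x = −(L + λD)/(D·E) satisfies the Lambert-type equation x e^x = −(λ/E) e^{−λ/E}. -/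
/-- equation (B.2): If `E = L / (D·ln(L/(λD) + 1))` with `L = ln(1/ε)`,
`ε ∈ (0,1)`, `λ, D, E > 0`, then `x = −(L + λD)/(D·E)` satisfies the Lambert-type
equation `x·e^x = −(λ/E)·e^{−λ/E}`. -/
theorem effective_bandwidth_identity_B2
    (ε l D E : ℝ) (hε : 0 < ε) (hε' : ε < 1) (hl : 0 < l) (hD : 0 < D) (hE : 0 < E)
    (L : ℝ) (hL : L = Real.log (1 / ε))
    (hEB : E = L / (D * Real.log (L / (l * D) + 1))) :
    -(l / E) * Real.exp (-(l / E)) =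
      ((L + l * D) / (-(D * E))) * Real.exp ((L + l * D) / (-(D * E))) := by
  have hlogε : Real.log ε < 0 := Real.log_neg hε hε'
  have hL0 : 0 < L := by rw [hL, one_div, Real.log_inv]; linarith
  have hlD : 0 < l * D := mul_pos hl hD
  have harg : 0 < L / (l * D) + 1 := by positivity
  have hln_ne : Real.log (L / (l * D) + 1) ≠ 0 := by
    intro h
    rw [h, mul_zero, div_zero] at hEB
    exact hE.ne' hEB
  have h2 : E * (D * Real.log (L / (l * D) + 1)) = L :=
    (eq_div_iff (by exact mul_ne_zero hD.ne' hln_ne)).mp hEB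
  have hln : Real.log (L / (l * D) + 1) = L / (D * E) := by
    rw [eq_div_iff (by positivity)]
    linear_combination h2
  have hexp : Real.exp (L / (D * E)) = (L + l * D) / (l * D) := by
    rw [← hln, Real.exp_log harg]
    field_simp
  have key : (L + l * D) / (-(D * E)) = -(l / E) + -(L / (D * E)) := by
    field_simp
    ring
  rw [key, Real.exp_add, Real.exp_neg (L / (D * E)), hexp]
  have h1 : L + l * D ≠ 0 := by positivity
  field_simp
  ring
end

section
/- (Abstraction of Proposition 2) Let f, g : ℕ → ℝ with f strictly antitone, g strictly monotone, and f(T) > 0, g(T) > 0 for all T. Suppose T̃ ∈ ℕ satisfies g(T) ≤ f(T) for all T ≤ T̃ and f(T) < g(T) for all T > T̃, and let T* ∈ ℕ be a minimizer of T ↦ f(T) + g(T) over ℕ. Then there exists T̂ ∈ {T̃, T̃ + 1} such that ( f(T̂) + g(T̂) ) − ( f(T*) + g(T*) ) < f(T*) + g(T*); equivalently, f(T̂) + g(T̂) < 2·( f(T*) + g(T*) ). -/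
/-- abstraction of Proposition 2: With `f` strictly antitone, `g`
strictly monotone, both positive, a crossing point `Ttil` (where `g ≤ f` up to `Ttil` and
`f < g` after `Ttil`), and `T*` a minimizer of `f + g` over `ℕ`, there exists
`That ∈ {Ttil, Ttil + 1}` such that `(f(That) + g(That)) − (f(T*) + g(T*)) < f(T*) + g(T*)`,
i.e., `f(That) + g(That) < 2·(f(T*) + g(T*))`. -/
theorem near_optimal_gap_bound
    (f g : ℕ → ℝ) (hf : StrictAnti f) (hg : StrictMono g)
    (hfpos : ∀ T, 0 < f T) (hgpos : ∀ T, 0 < g T)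
    (Ttil : ℕ)
    (h₁ : ∀ T, T ≤ Ttil → g T ≤ f T)
    (h₂ : ∀ T, Ttil < T → f T < g T)
    (Tstar : ℕ) (hTstar : ∀ T : ℕ, f Tstar + g Tstar ≤ f T + g T) :
    ∃ That ∈ ({Ttil, Ttil + 1} : Set ℕ),
      (f That + g That) - (f Tstar + g Tstar) < f Tstar + g Tstar := by
  rcases le_or_gt Tstar Ttil with hle | hlt
  · refine ⟨Ttil, Or.inl rfl, ?_⟩
    have hfT : f Ttil ≤ f Tstar := hf.antitone hle
    have hgT : g Ttil ≤ f Tstar := le_trans (h₁ Ttil le_rfl) hfT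
    have := hgpos Tstar
    linarith
  · refine ⟨Ttil + 1, Or.inr rfl, ?_⟩
    have hle : Ttil + 1 ≤ Tstar := hlt
    have hgT : g (Ttil + 1) ≤ g Tstar := hg.monotone hle
    have hfT : f (Ttil + 1) < g (Ttil + 1) := h₂ _ (Nat.lt_succ_self _)
    have := hfpos Tstar
    linarith
end
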